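/- Let S(t) be the axisymmetric vorticity semigroup defined via the kernel (1/(4πt)) (r̄/r)^{1/2} H(t/(r r̄)) exp(−((r−r̄)² + (z−z̄)²)/(4t)) on Ω = {(r,z) : r > 0}. Then for all 1 ≤ p ≤ q ≤ ∞, all t > 0 and all g ∈ L^p(Ω; dr dz): ‖S(t)(g/r)‖_{L^q(Ω)} ≤ C t^{−(1/2 + 1/p − 1/q)} ‖g‖_{L^p(Ω)}. -/

import Mathlib

open Real MeasureTheory ENNReal

/-- The half-plane `Ω = {(r,z) : r > 0}`. -/
def sgOmega : Set (ℝ × ℝ) := {x : ℝ × ℝ | 0 < x.1}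

/-- The 2D measure `dr dz` on the half-plane. -/
noncomputable def sgMu : Measure (ℝ × ℝ) := (volume : Measure (ℝ × ℝ)).restrict sgOmega

/-- `H(t) = (1/√(πt)) ∫_{-π/2}^{π/2} e^{-sin²φ/t} cos(2φ) dφ`. -/
noncomputable def sgH (t : ℝ) : ℝ :=
  (1 / Real.sqrt (π * t)) *
    ∫ φ in (-(π/2))..(π/2), Real.exp (-(Real.sin φ)^2 / t) * Real.cos (2*φ)

/-- The axisymmetric vorticity semigroup
`(S(t)g)(r,z) = (1/(4πt)) ∫_Ω (r̄/r)^{1/2} H(t/(r r̄)) e^{-((r-r̄)²+(z-z̄)²)/(4t)} g(r̄,z̄) dr̄ dz̄`. -/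
noncomputable def sgS (t : ℝ) (g : ℝ × ℝ → ℝ) (x : ℝ × ℝ) : ℝ :=
  (1 / (4*π*t)) *
    ∫ w in sgOmega, Real.sqrt (w.1 / x.1) * sgH (t / (x.1 * w.1)) *
      Real.exp (-(((x.1 - w.1)^2 + (x.2 - w.2)^2) / (4*t))) * g w

/-
The function `H` satisfies `|H(s)| ≤ √(π/s)`, since its defining integral is at most `π` in absolute
value, and this bound exactly absorbs the weight `(r̄/r)^{1/2} / r̄`: the kernel of `g ↦ S(t)(g/r)` is
dominated by `√(π/t) / (4πt)` times the Gaussian `e^{-|x-w|²/4t}`. That Gaussian is at most `1` and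
integrates to `4πt` in either variable, so interpolating Hölder's bound `L^p → L^∞` with Schur's
bound `L^p → L^p` bounds it from `L^p` to `L^q` by `(4πt)^{1 + 1/q - 1/p}`, which leaves the factor
`t^{-(1/2 + 1/p - 1/q)}`.
-/

theorem inv_toReal_le_inv_toReal {p q : ℝ≥0∞} (hp : p ≠ 0) (hpq : p ≤ q) :
    q.toReal⁻¹ ≤ p.toReal⁻¹ := by
  rw [← toReal_inv, ← toReal_inv]
  exact toReal_mono (inv_ne_top.2 hp) (ENNReal.inv_le_inv.2 hpq)

section KernelBounds

variable {α β : Type*} [MeasurableSpace α] [MeasurableSpace β] {μ : Measure α} {ν : Measure β}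

theorem lintegral_mul_le_rpow_mul_lintegral_mul_rpow {K F : β → ℝ≥0∞}
    (hK : AEMeasurable K ν) (hF : AEMeasurable F ν) {M : ℝ≥0∞} (hM : ∫⁻ w, K w ∂ν ≤ M)
    {p : ℝ} (hp : 1 ≤ p) :
    ∫⁻ w, K w * F w ∂ν ≤ M ^ (1 - 1/p) * (∫⁻ w, K w * F w ^ p ∂ν) ^ (1/p) := by
  have hp0 : 0 < p := by linarith
  have h1p : 0 ≤ 1 - 1/p := by rw [sub_nonneg, div_le_one hp0]; exact hp
  calc ∫⁻ w, K w * F w ∂ν = ∫⁻ w, K w ^ (1 - 1/p) * (K w * F w ^ p) ^ (1/p) ∂ν := by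
        refine lintegral_congr fun w => ?_
        rw [ENNReal.mul_rpow_of_nonneg _ _ (by positivity), ← mul_assoc,
          ← ENNReal.rpow_add_of_nonneg _ _ h1p (by positivity), ← ENNReal.rpow_mul,
          show 1 - 1/p + 1/p = 1 by ring, show p * (1/p) = 1 by field_simp]
        simp
    _ ≤ (∫⁻ w, K w ∂ν) ^ (1 - 1/p) * (∫⁻ w, K w * F w ^ p ∂ν) ^ (1/p) :=
        ENNReal.lintegral_mul_norm_pow_le hK (hK.mul (hF.pow_const p)) h1p (by positivity)
          (by ring)
    _ ≤ M ^ (1 - 1/p) * (∫⁻ w, K w * F w ^ p ∂ν) ^ (1/p) := by gcongr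

theorem lintegral_mul_le_rpow_mul_eLpNorm {K F : β → ℝ≥0∞} (hK : AEMeasurable K ν)
    (hF : AEMeasurable F ν) (hK_le_one : ∀ w, K w ≤ 1) {M : ℝ≥0∞} (hM : ∫⁻ w, K w ∂ν ≤ M)
    {p : ℝ≥0∞} (hp : 1 ≤ p) :
    ∫⁻ w, K w * F w ∂ν ≤ M ^ (1 - 1/p.toReal) * eLpNorm F p ν := by
  rcases eq_or_ne p ∞ with rfl | hp_top
  · calc ∫⁻ w, K w * F w ∂ν ≤ ∫⁻ w, K w * eLpNorm F ∞ ν ∂ν := by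
          refine lintegral_mono_ae ?_
          filter_upwards [ae_le_eLpNormEssSup (f := F) (μ := ν)] with w hw
          rw [eLpNorm_exponent_top]
          gcongr
          exact hw
      _ ≤ M ^ (1 - 1/(∞ : ℝ≥0∞).toReal) * eLpNorm F ∞ ν := by
          rw [lintegral_mul_const'' _ hK]
          simpa using mul_le_mul_left hM _
  have hp0 : p ≠ 0 := (zero_lt_one.trans_le hp).ne'
  have hP : 1 ≤ p.toReal := by
    simpa using ENNReal.toReal_mono hp_top hp
  refine (lintegral_mul_le_rpow_mul_lintegral_mul_rpow hK hF hM hP).trans ?_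
  rw [eLpNorm_eq_lintegral_rpow_enorm_toReal hp0 hp_top]
  gcongr with w
  calc K w * F w ^ p.toReal ≤ 1 * F w ^ p.toReal := by gcongr; exact hK_le_one w
    _ = ‖F w‖ₑ ^ p.toReal := by simp

theorem lintegral_lintegral_mul_le [SFinite μ] [SFinite ν] {K : α → β → ℝ≥0∞}
    (hK : Measurable (Function.uncurry K)) {M : ℝ≥0∞} (hcol : ∀ w, ∫⁻ x, K x w ∂μ ≤ M)
    {G : β → ℝ≥0∞} (hG : Measurable G) :
    ∫⁻ x, ∫⁻ w, K x w * G w ∂ν ∂μ ≤ M * ∫⁻ w, G w ∂ν := by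
  calc ∫⁻ x, ∫⁻ w, K x w * G w ∂ν ∂μ = ∫⁻ w, (∫⁻ x, K x w ∂μ) * G w ∂ν := by
        rw [lintegral_lintegral_swap (hK.mul (hG.comp measurable_snd)).aemeasurable]
        exact lintegral_congr fun w => lintegral_mul_const _ (hK.comp measurable_prodMk_right)
    _ ≤ ∫⁻ w, M * G w ∂ν := by gcongr with w; exact hcol w
    _ = M * ∫⁻ w, G w ∂ν := lintegral_const_mul _ hG

theorem interpolation_exponent_eq (M N : ℝ≥0∞) {P Q : ℝ} (hP : 1 ≤ P) (hPQ : P ≤ Q) :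
    (M ^ (1 - 1/P) * N) ^ (Q - P) * M ^ (P - 1) * (M * N ^ P)
      = (M ^ (1 + 1/Q - 1/P) * N) ^ Q := by
  have h1P : 0 ≤ 1 - 1/P := by rw [sub_nonneg, div_le_one (by linarith)]; exact hP
  rw [ENNReal.mul_rpow_of_nonneg _ _ (by linarith), ENNReal.mul_rpow_of_nonneg _ _ (by linarith),
    ← ENNReal.rpow_mul, ← ENNReal.rpow_mul]
  calc _ = M ^ ((1 - 1/P) * (Q - P)) * M ^ (P - 1) * M ^ (1 : ℝ) * (N ^ (Q - P) * N ^ P) := by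
        rw [ENNReal.rpow_one]; ring
    _ = M ^ ((1 - 1/P) * (Q - P) + (P - 1) + 1) * N ^ (Q - P + P) := by
        rw [← ENNReal.rpow_add_of_nonneg _ _ (by nlinarith) (by linarith),
          ← ENNReal.rpow_add_of_nonneg _ _ (by nlinarith) zero_le_one,
          ← ENNReal.rpow_add_of_nonneg _ _ (by linarith) (by linarith)]
    _ = _ := by
        have hQ0 : Q ≠ 0 := by linarith
        congr 2
        · field_simp
          ring
        · ring

theorem eLpNorm_lintegral_kernel_mul_le_of_ne_top [SFinite μ] [SFinite ν] {K : α → β → ℝ≥0∞}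
    (hK : Measurable (Function.uncurry K)) (hK_le_one : ∀ x w, K x w ≤ 1) {M : ℝ≥0∞}
    (hrow : ∀ x, ∫⁻ w, K x w ∂ν ≤ M) (hcol : ∀ w, ∫⁻ x, K x w ∂μ ≤ M)
    {F : β → ℝ≥0∞} (hF : Measurable F) {p q : ℝ≥0∞} (hp : 1 ≤ p) (hpq : p ≤ q) (hq : q ≠ ∞) :
    eLpNorm (fun x => ∫⁻ w, K x w * F w ∂ν) q μ
      ≤ M ^ (1 + 1/q.toReal - 1/p.toReal) * eLpNorm F p ν := by
  have hp_top : p ≠ ∞ := ne_top_of_le_ne_top hq hpq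
  have hp0 : p ≠ 0 := (zero_lt_one.trans_le hp).ne'
  have hq0 : q ≠ 0 := (zero_lt_one.trans_le (hp.trans hpq)).ne'
  set P := p.toReal
  set Q := q.toReal
  have hP : 1 ≤ P := by simpa using ENNReal.toReal_mono hp_top hp
  have hPQ : P ≤ Q := ENNReal.toReal_mono hq hpq
  set N := eLpNorm F p ν with hN
  have hKx : ∀ x, Measurable (K x) := fun x => hK.comp measurable_prodMk_left
  have hKF_meas : Measurable fun x => ∫⁻ w, K x w * F w ^ P ∂ν :=
    (hK.mul ((hF.pow_const P).comp measurable_snd)).lintegral_prod_right'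
  -- Split the `Q`-th power as `(Q - P) + P`: Hölder bounds the first factor uniformly in `x`,
  -- and the second is integrable in `x` by the column bound.
  have hpt : ∀ x, (∫⁻ w, K x w * F w ∂ν) ^ Q
      ≤ (M ^ (1 - 1/P) * N) ^ (Q - P) * (M ^ (P - 1) * ∫⁻ w, K x w * F w ^ P ∂ν) := fun x => by
    have hsup := lintegral_mul_le_rpow_mul_eLpNorm (hKx x).aemeasurable hF.aemeasurable
      (hK_le_one x) (hrow x) hp
    have hpow : (∫⁻ w, K x w * F w ∂ν) ^ P ≤ M ^ (P - 1) * ∫⁻ w, K x w * F w ^ P ∂ν := by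
      refine (ENNReal.rpow_le_rpow (lintegral_mul_le_rpow_mul_lintegral_mul_rpow
        (hKx x).aemeasurable hF.aemeasurable (hrow x) hP) (by linarith)).trans_eq ?_
      rw [ENNReal.mul_rpow_of_nonneg _ _ (by linarith), ← ENNReal.rpow_mul, ← ENNReal.rpow_mul,
        one_div_mul_cancel (by linarith), ENNReal.rpow_one]
      congr 2
      field_simp
    rw [← sub_add_cancel Q P, ENNReal.rpow_add_of_nonneg _ _ (by linarith) (by linarith),
      add_sub_cancel_right]
    exact mul_le_mul' (ENNReal.rpow_le_rpow hsup (by linarith)) hpow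
  have hNP : ∫⁻ w, F w ^ P ∂ν = N ^ P := by
    rw [hN, eLpNorm_eq_eLpNorm' hp0 hp_top, ← lintegral_rpow_enorm_eq_rpow_eLpNorm' (by linarith)]
    rfl
  have hmain : ∫⁻ x, (∫⁻ w, K x w * F w ∂ν) ^ Q ∂μ ≤ (M ^ (1 + 1/Q - 1/P) * N) ^ Q := by
    calc ∫⁻ x, (∫⁻ w, K x w * F w ∂ν) ^ Q ∂μ
        ≤ ∫⁻ x, (M ^ (1 - 1/P) * N) ^ (Q - P) * (M ^ (P - 1) * ∫⁻ w, K x w * F w ^ P ∂ν) ∂μ :=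
          lintegral_mono hpt
      _ = (M ^ (1 - 1/P) * N) ^ (Q - P) * M ^ (P - 1) * ∫⁻ x, ∫⁻ w, K x w * F w ^ P ∂ν ∂μ := by
          rw [lintegral_const_mul _ (hKF_meas.const_mul _), lintegral_const_mul _ hKF_meas,
            mul_assoc]
      _ ≤ (M ^ (1 - 1/P) * N) ^ (Q - P) * M ^ (P - 1) * (M * N ^ P) := by
          rw [← hNP]
          gcongr
          exact lintegral_lintegral_mul_le hK hcol (hF.pow_const P)
      _ = (M ^ (1 + 1/Q - 1/P) * N) ^ Q := interpolation_exponent_eq M N hP hPQ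
  rw [eLpNorm_eq_lintegral_rpow_enorm_toReal hq0 hq, one_div Q,
    ENNReal.rpow_inv_le_iff (by linarith)]
  simpa using hmain

theorem eLpNorm_lintegral_kernel_mul_le [SFinite μ] [SFinite ν] {K : α → β → ℝ≥0∞}
    (hK : Measurable (Function.uncurry K)) (hK_le_one : ∀ x w, K x w ≤ 1) {M : ℝ≥0∞}
    (hrow : ∀ x, ∫⁻ w, K x w ∂ν ≤ M) (hcol : ∀ w, ∫⁻ x, K x w ∂μ ≤ M)
    {F : β → ℝ≥0∞} (hF : AEMeasurable F ν) {p q : ℝ≥0∞} (hp : 1 ≤ p) (hpq : p ≤ q) :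
    eLpNorm (fun x => ∫⁻ w, K x w * F w ∂ν) q μ
      ≤ M ^ (1 + 1/q.toReal - 1/p.toReal) * eLpNorm F p ν := by
  wlog hFm : Measurable F generalizing F
  · have hT : (fun x => ∫⁻ w, K x w * F w ∂ν) = fun x => ∫⁻ w, K x w * hF.mk F w ∂ν :=
      funext fun x => lintegral_congr_ae (hF.ae_eq_mk.mono fun w hw => by simp only [hw])
    rw [hT, eLpNorm_congr_ae hF.ae_eq_mk]
    exact this hF.measurable_mk.aemeasurable hF.measurable_mk
  rcases eq_or_ne q ∞ with rfl | hq
  · rw [eLpNorm_exponent_top]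
    refine eLpNormEssSup_le_of_ae_enorm_bound (ae_of_all _ fun x => ?_)
    simpa [sub_eq_add_neg] using lintegral_mul_le_rpow_mul_eLpNorm
      (hK.comp measurable_prodMk_left).aemeasurable hF (hK_le_one x) (hrow x) hp
  exact eLpNorm_lintegral_kernel_mul_le_of_ne_top hK hK_le_one hrow hcol hFm hp hpq hq

end KernelBounds

theorem measurableSet_sgOmega : MeasurableSet sgOmega :=
  measurableSet_lt measurable_const measurable_fst

instance : SigmaFinite sgMu := by
  unfold sgMu
  infer_instance

theorem abs_sgH_le {s : ℝ} (hs : 0 < s) : |sgH s| ≤ √(π / s) := by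
  have hI : |∫ φ in (-(π/2))..(π/2), exp (-(sin φ)^2 / s) * cos (2*φ)| ≤ π := by
    have := intervalIntegral.norm_integral_le_of_norm_le_const (C := 1)
      (f := fun φ => exp (-(sin φ)^2 / s) * cos (2*φ)) (a := -(π/2)) (b := π/2) fun φ _ => by
        rw [norm_mul, Real.norm_of_nonneg (exp_pos _).le]
        exact mul_le_one₀ (exp_le_one_iff.2 (by rw [neg_div]; exact neg_nonpos.2 (by positivity)))
          (norm_nonneg _) (abs_cos_le_one _)
    rwa [one_mul, sub_neg_eq_add, add_halves, abs_of_pos pi_pos] at this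
  calc |sgH s| = |∫ φ in (-(π/2))..(π/2), exp (-(sin φ)^2 / s) * cos (2*φ)| / √(π * s) := by
        rw [sgH, abs_mul, abs_of_pos (by positivity), one_div_mul_eq_div]
    _ ≤ π / √(π * s) := by gcongr
    _ = √(π / s) := by
        rw [sqrt_div pi_pos.le, sqrt_mul pi_pos.le]
        field_simp
        rw [sq_sqrt pi_pos.le]

theorem abs_sqrt_div_mul_sgH_div_le {t r r' : ℝ} (ht : 0 < t) (hr : 0 < r) (hr' : 0 < r') :
    |√(r' / r) * sgH (t / (r * r')) / r'| ≤ √(π / t) := by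
  calc |√(r' / r) * sgH (t / (r * r')) / r'| = √(r' / r) * |sgH (t / (r * r'))| / r' := by
        rw [abs_div, abs_mul, abs_of_nonneg (sqrt_nonneg _), abs_of_pos hr']
    _ ≤ √(r' / r) * √(π / (t / (r * r'))) / r' := by gcongr; exact abs_sgH_le (by positivity)
    _ = √(π / t) := by
        rw [← sqrt_mul (by positivity), show r' / r * (π / (t / (r * r'))) = r' ^ 2 * (π / t) by
          field_simp, sqrt_mul (by positivity), sqrt_sq hr'.le]
        field_simp

theorem lintegral_exp_neg_mul_sq_sub {b : ℝ} (hb : 0 < b) (c : ℝ) :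
    ∫⁻ y : ℝ, ENNReal.ofReal (exp (-b * (y - c) ^ 2)) = ENNReal.ofReal √(π / b) := by
  rw [← ofReal_integral_eq_lintegral_ofReal ((integrable_exp_neg_mul_sq hb).comp_sub_right c)
    (ae_of_all _ fun y => (exp_pos _).le),
    integral_sub_right_eq_self (fun y => exp (-b * y ^ 2)) c, integral_gaussian]

noncomputable def gaussKernel (t : ℝ) (x w : ℝ × ℝ) : ℝ≥0∞ :=
  ENNReal.ofReal (exp (-(((x.1 - w.1) ^ 2 + (x.2 - w.2) ^ 2) / (4 * t))))

theorem measurable_gaussKernel (t : ℝ) : Measurable (Function.uncurry (gaussKernel t)) := by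
  unfold gaussKernel Function.uncurry
  fun_prop

theorem gaussKernel_le_one (t : ℝ) (ht : 0 < t) (x w : ℝ × ℝ) : gaussKernel t x w ≤ 1 :=
  ofReal_le_one.2 (exp_le_one_iff.2 (neg_nonpos.2 (by positivity)))

theorem gaussKernel_comm (t : ℝ) (x w : ℝ × ℝ) : gaussKernel t x w = gaussKernel t w x := by
  simp only [gaussKernel]
  ring_nf

theorem lintegral_gaussKernel {t : ℝ} (ht : 0 < t) (x : ℝ × ℝ) :
    ∫⁻ w, gaussKernel t x w = ENNReal.ofReal (4 * π * t) := by
  have hb : 0 < 1 / (4 * t) := by positivity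
  have hsplit : ∀ w : ℝ × ℝ, gaussKernel t x w = ENNReal.ofReal (exp (-(1 / (4 * t)) * (w.1 - x.1) ^ 2))
      * ENNReal.ofReal (exp (-(1 / (4 * t)) * (w.2 - x.2) ^ 2)) := fun w => by
    rw [gaussKernel, ← ofReal_mul (exp_pos _).le, ← exp_add]
    ring_nf
  simp_rw [hsplit]
  rw [Measure.volume_eq_prod,
    lintegral_prod_mul (f := fun y => ENNReal.ofReal (exp (-(1 / (4 * t)) * (y - x.1) ^ 2)))
      (g := fun y => ENNReal.ofReal (exp (-(1 / (4 * t)) * (y - x.2) ^ 2))) (by fun_prop)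
      (by fun_prop),
    lintegral_exp_neg_mul_sq_sub hb, lintegral_exp_neg_mul_sq_sub hb, ← ofReal_mul (sqrt_nonneg _),
    mul_self_sqrt (by positivity)]
  congr 1
  field_simp

theorem lintegral_gaussKernel_le {t : ℝ} (ht : 0 < t) (x : ℝ × ℝ) :
    ∫⁻ w, gaussKernel t x w ∂sgMu ≤ ENNReal.ofReal (4 * π * t) :=
  (lintegral_mono' Measure.restrict_le_self le_rfl).trans (lintegral_gaussKernel ht x).le

theorem enorm_sgS_div_le {t : ℝ} (ht : 0 < t) (g : ℝ × ℝ → ℝ) {x : ℝ × ℝ} (hx : 0 < x.1) :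
    ‖sgS t (fun w => g w / w.1) x‖ₑ
      ≤ ENNReal.ofReal (√(π / t) / (4 * π * t)) * ∫⁻ w, gaussKernel t x w * ‖g w‖ₑ ∂sgMu := by
  have hintegrand : ∀ᵐ w ∂sgMu, ‖√(w.1 / x.1) * sgH (t / (x.1 * w.1)) *
      exp (-(((x.1 - w.1) ^ 2 + (x.2 - w.2) ^ 2) / (4 * t))) * (g w / w.1)‖ₑ
      ≤ ENNReal.ofReal √(π / t) * (gaussKernel t x w * ‖g w‖ₑ) := by
    filter_upwards [ae_restrict_mem measurableSet_sgOmega] with w (hw : 0 < w.1)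
    rw [show √(w.1 / x.1) * sgH (t / (x.1 * w.1)) *
        exp (-(((x.1 - w.1) ^ 2 + (x.2 - w.2) ^ 2) / (4 * t))) * (g w / w.1)
        = √(w.1 / x.1) * sgH (t / (x.1 * w.1)) / w.1 *
          exp (-(((x.1 - w.1) ^ 2 + (x.2 - w.2) ^ 2) / (4 * t))) * g w by ring,
      enorm_mul, enorm_mul, Real.enorm_of_nonneg (exp_pos _).le, mul_assoc, gaussKernel]
    gcongr
    rw [Real.enorm_eq_ofReal_abs]
    exact ofReal_le_ofReal (abs_sqrt_div_mul_sgH_div_le ht hx hw)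
  calc ‖sgS t (fun w => g w / w.1) x‖ₑ
      = ENNReal.ofReal (1 / (4 * π * t)) * ‖∫ w, √(w.1 / x.1) * sgH (t / (x.1 * w.1)) *
          exp (-(((x.1 - w.1) ^ 2 + (x.2 - w.2) ^ 2) / (4 * t))) * (g w / w.1) ∂sgMu‖ₑ := by
        rw [sgS, enorm_mul, Real.enorm_of_nonneg (by positivity), sgMu]
    _ ≤ ENNReal.ofReal (1 / (4 * π * t)) *
          ∫⁻ w, ENNReal.ofReal √(π / t) * (gaussKernel t x w * ‖g w‖ₑ) ∂sgMu := by
        gcongr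
        exact (enorm_integral_le_lintegral_enorm _).trans (lintegral_mono_ae hintegrand)
    _ = ENNReal.ofReal (√(π / t) / (4 * π * t)) * ∫⁻ w, gaussKernel t x w * ‖g w‖ₑ ∂sgMu := by
        rw [lintegral_const_mul' _ _ ofReal_ne_top, ← mul_assoc, ← ofReal_mul (by positivity)]
        congr 2
        ring

theorem sqrt_pi_div_mul_rpow_le {t e : ℝ} (ht : 0 < t) (he : e ≤ 1) :
    √(π / t) / (4 * π * t) * (4 * π * t) ^ e ≤ √π * t ^ (e - 3 / 2) := by
  have h4π : 1 ≤ 4 * π := by linarith [pi_gt_three]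
  calc √(π / t) / (4 * π * t) * (4 * π * t) ^ e = √π * (4 * π) ^ (e - 1) * t ^ (e - 3 / 2) := by
        rw [div_mul_eq_mul_div, mul_div_assoc, ← rpow_sub_one (by positivity),
          mul_rpow (by positivity) ht.le, sqrt_div pi_pos.le, sqrt_eq_rpow t,
          show e - 3 / 2 = (e - 1) - 1 / 2 by ring, rpow_sub ht (e - 1) (1 / 2)]
        ring
    _ ≤ √π * 1 * t ^ (e - 3 / 2) := by
        gcongr
        exact rpow_le_one_of_one_le_of_nonpos h4π (by linarith)
    _ = √π * t ^ (e - 3 / 2) := by rw [mul_one]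

/-- `‖S(t)(g/r)‖_{L^q(Ω)} ≤ C t^{-(1/2 + 1/p - 1/q)} ‖g‖_{L^p(Ω)}` for all
`1 ≤ p ≤ q ≤ ∞` and `t > 0`. -/
theorem stmt11 :
    ∃ C : ℝ, 0 < C ∧ ∀ (p q : ℝ≥0∞), 1 ≤ p → p ≤ q → ∀ t : ℝ, 0 < t →
      ∀ g : ℝ × ℝ → ℝ, MemLp g p sgMu →
      eLpNorm (sgS t (fun w : ℝ × ℝ => g w / w.1)) q sgMu
        ≤ ENNReal.ofReal (C * t ^ (-(1/2 + 1/p.toReal - 1/q.toReal))) * eLpNorm g p sgMu := by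
  refine ⟨√π, by positivity, fun p q hp hpq t ht g hg => ?_⟩
  have he : 1 + 1 / q.toReal - 1 / p.toReal ≤ 1 := by
    have := inv_toReal_le_inv_toReal (zero_lt_one.trans_le hp).ne' hpq
    simp only [one_div]
    linarith
  have hS : eLpNorm (sgS t (fun w => g w / w.1)) q sgMu
      ≤ Real.toNNReal (√(π / t) / (4 * π * t)) •
        eLpNorm (fun x => ∫⁻ w, gaussKernel t x w * ‖g w‖ₑ ∂sgMu) q sgMu :=
    eLpNorm_le_nnreal_smul_eLpNorm_of_ae_le_mul'
      ((ae_restrict_mem measurableSet_sgOmega).mono fun x hx => enorm_sgS_div_le ht g hx) q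
  have hT := eLpNorm_lintegral_kernel_mul_le (measurable_gaussKernel t) (gaussKernel_le_one t ht)
    (lintegral_gaussKernel_le ht)
    (fun w => by simpa only [gaussKernel_comm t _ w] using lintegral_gaussKernel_le ht w)
    hg.1.enorm hp hpq
  rw [eLpNorm_enorm] at hT
  calc _ ≤ ENNReal.ofReal (√(π / t) / (4 * π * t)) *
        (ENNReal.ofReal (4 * π * t) ^ (1 + 1 / q.toReal - 1 / p.toReal) * eLpNorm g p sgMu) :=
        hS.trans (by rw [ENNReal.smul_def, smul_eq_mul]; exact mul_le_mul_right hT _)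
    _ = ENNReal.ofReal (√(π / t) / (4 * π * t) * (4 * π * t) ^ (1 + 1 / q.toReal - 1 / p.toReal))
          * eLpNorm g p sgMu := by
        rw [ofReal_rpow_of_pos (by positivity), ← mul_assoc, ← ofReal_mul (by positivity)]
    _ ≤ _ := by
        refine mul_le_mul_left (ofReal_le_ofReal ?_) _
        refine (sqrt_pi_div_mul_rpow_le ht he).trans_eq ?_
        ring_nf
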